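/- Define u, f : ℝ² → ℝ by u(x,y) = -(1/2)·log(1 + x² + y²) and f(x,y) = -2·log(1 + x² + y²). Then for all (x,y) ∈ ℝ² and all indices i, j ∈ {1,2} (with ∂₁, ∂₂ the partial derivatives in x and y, and δ_ij the Kronecker delta), the following identity holds: ∂_i∂_j f - (∂_i u)(∂_j f) - (∂_j u)(∂_i f) + δ_ij·((∂₁u)(∂₁f) + (∂₂u)(∂₂f)) + (4/(1 + x² + y²))·(1/(1 + x² + y²))·δ_ij = 0. In other words, the covariant Hessian of f with respect to the cigar metric g_Σ satisfies (Hess_{g_Σ} f)_ij = -R·(g_Σ)_ij with R = 4/(1 + x² + y²), so the cigar (ℝ², g_Σ, f) is a steady gradient Yamabe soliton: R·g_ij + ∇_i∇_j f = 0. -/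

import Mathlib

/-- Partial derivative in the first variable of a function `ℝ → ℝ → ℝ`. -/
noncomputable def pderiv1 (g : ℝ → ℝ → ℝ) (x y : ℝ) : ℝ :=
  deriv (fun t => g t y) x

/-- Partial derivative in the second variable of a function `ℝ → ℝ → ℝ`. -/
noncomputable def pderiv2 (g : ℝ → ℝ → ℝ) (x y : ℝ) : ℝ :=
  deriv (fun t => g x t) y

/-- The `i`-th partial derivative operator, `i : Fin 2`. -/
noncomputable def pd : Fin 2 → (ℝ → ℝ → ℝ) → ℝ → ℝ → ℝ :=
  ![pderiv1, pderiv2]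

/-!
Write `ρ = 1 + x² + y²` and `p = (x, y)`. Then `∂ᵢ log ρ = 2pᵢ/ρ`, so `∂u = -p/ρ`, `∂f = -4p/ρ` and
`∂ᵢ∂ⱼf = -4(δᵢⱼρ - 2pᵢpⱼ)/ρ²`. The two cross terms `-∂ᵢu ∂ⱼf - ∂ⱼu ∂ᵢf = -8pᵢpⱼ/ρ²` cancel the
`8pᵢpⱼ/ρ²` in `∂ᵢ∂ⱼf`, and what remains is `δᵢⱼ(-4ρ + 4|p|² + 4)/ρ² = 0`.
-/

open Real

lemma pd_zero (g : ℝ → ℝ → ℝ) (x y : ℝ) : pd 0 g x y = deriv (fun t => g t y) x := rfl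

lemma pd_one (g : ℝ → ℝ → ℝ) (x y : ℝ) : pd 1 g x y = deriv (fun t => g x t) y := rfl

lemma one_add_sq_add_sq_ne_zero (x y : ℝ) : 1 + x ^ 2 + y ^ 2 ≠ 0 := by positivity

lemma hasDerivAt_one_add_sq_add_sq_fst (x y : ℝ) :
    HasDerivAt (fun t => 1 + t ^ 2 + y ^ 2) (2 * x) x := by
  simpa using ((hasDerivAt_pow 2 x).const_add 1).add_const (y ^ 2)

lemma hasDerivAt_one_add_sq_add_sq_snd (x y : ℝ) :
    HasDerivAt (fun t => 1 + x ^ 2 + t ^ 2) (2 * y) y := by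
  simpa using (hasDerivAt_pow 2 y).const_add (1 + x ^ 2)

lemma hasDerivAt_vecCons_apply_fst (x y : ℝ) (j : Fin 2) :
    HasDerivAt (fun t => ![t, y] j) (if 0 = j then 1 else 0) x := by
  fin_cases j
  · simpa using hasDerivAt_id' x
  · simpa using hasDerivAt_const x y

lemma hasDerivAt_vecCons_apply_snd (x y : ℝ) (j : Fin 2) :
    HasDerivAt (fun t => ![x, t] j) (if 1 = j then 1 else 0) y := by
  fin_cases j
  · simpa using hasDerivAt_const y x
  · simpa using hasDerivAt_id' y

lemma pd_const_mul_log (c : ℝ) (i : Fin 2) (x y : ℝ) :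
    pd i (fun x y => c * log (1 + x ^ 2 + y ^ 2)) x y
      = 2 * c * ![x, y] i / (1 + x ^ 2 + y ^ 2) := by
  have hρ := one_add_sq_add_sq_ne_zero x y
  match i with
  | 0 =>
    rw [pd_zero,
      (((hasDerivAt_one_add_sq_add_sq_fst x y).log hρ).const_mul c).deriv]
    simp only [Matrix.cons_val_zero]
    ring
  | 1 =>
    rw [pd_one,
      (((hasDerivAt_one_add_sq_add_sq_snd x y).log hρ).const_mul c).deriv]
    simp only [Matrix.cons_val_zero, Matrix.cons_val_one]
    ring

lemma pd_const_mul_vec_div (c : ℝ) (i j : Fin 2) (x y : ℝ) :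
    pd i (fun x y => c * ![x, y] j / (1 + x ^ 2 + y ^ 2)) x y
      = c * ((if i = j then 1 else 0) * (1 + x ^ 2 + y ^ 2) - 2 * ![x, y] i * ![x, y] j)
          / (1 + x ^ 2 + y ^ 2) ^ 2 := by
  have hρ := one_add_sq_add_sq_ne_zero x y
  match i with
  | 0 =>
    rw [pd_zero,
      (((hasDerivAt_vecCons_apply_fst x y j).const_mul c).fun_div
        (hasDerivAt_one_add_sq_add_sq_fst x y) hρ).deriv]
    simp only [Matrix.cons_val_zero]
    ring
  | 1 =>
    rw [pd_one,
      (((hasDerivAt_vecCons_apply_snd x y j).const_mul c).fun_div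
        (hasDerivAt_one_add_sq_add_sq_snd x y) hρ).deriv]
    simp only [Matrix.cons_val_zero, Matrix.cons_val_one]
    ring

/-- The cigar `(ℝ², g_Σ, f)` with `g_Σ = e^{2u}·δ`, `u = -(1/2)log(1+x²+y²)`
and `f = -2·log(1+x²+y²)` is a steady gradient Yamabe soliton: the covariant
Hessian of `f` in the metric `g_Σ`, computed via
`(Hess f)_ij = ∂_i∂_j f - ∂_iu·∂_jf - ∂_ju·∂_if + δ_ij⟨∂u,∂f⟩`, satisfies
`R·(g_Σ)_ij + (Hess f)_ij = 0` with `R = 4/(1+x²+y²)` and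
`(g_Σ)_ij = δ_ij/(1+x²+y²)`. -/
theorem cigar_steady_gradient_yamabe_soliton (u f : ℝ → ℝ → ℝ)
    (hu : ∀ x y, u x y = -(1 / 2) * Real.log (1 + x ^ 2 + y ^ 2))
    (hf : ∀ x y, f x y = -2 * Real.log (1 + x ^ 2 + y ^ 2)) :
    ∀ (x y : ℝ) (i j : Fin 2),
      pd i (pd j f) x y
        - pd i u x y * pd j f x y
        - pd j u x y * pd i f x y
        + (if i = j then (1 : ℝ) else 0) *
            (pd 0 u x y * pd 0 f x y + pd 1 u x y * pd 1 f x y)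
        + (4 / (1 + x ^ 2 + y ^ 2)) * (1 / (1 + x ^ 2 + y ^ 2)) *
            (if i = j then (1 : ℝ) else 0)
        = 0 := by
  obtain rfl : u = _ := funext₂ hu
  obtain rfl : f = _ := funext₂ hf
  intro x y i j
  have hfj : pd j (fun x y => -2 * log (1 + x ^ 2 + y ^ 2))
      = fun x y => 2 * -2 * ![x, y] j / (1 + x ^ 2 + y ^ 2) :=
    funext₂ (pd_const_mul_log (-2) j)
  rw [hfj, pd_const_mul_vec_div]
  simp only [pd_const_mul_log, Matrix.cons_val_zero, Matrix.cons_val_one]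
  have hρ := one_add_sq_add_sq_ne_zero x y
  field_simp
  ring
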